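/- Let G be the presented group on generators A₁, A₃, B, V with relators expressing: A₁A₃ = A₃A₁; A₁BA₁ = BA₁B; A₃BA₃ = BA₃B; VA₁V⁻¹ = A₁⁻¹; VBV⁻¹ = B⁻¹; and V² = (A₁²A₃B)³. Set W := V⁻¹A₃V and let L := Subgroup.closure {A₁, A₃, B, W} ≤ G. Then L is a normal subgroup of G, V ∉ L, V² ∈ L, and L has index 2 in G. -/
import Mathlib


namespace ModN31

/-- Generators `A₁, A₃, B, V` of the presentation of `Mod(N_{3,1})`. -/
inductive GenV : Type
  | A1 | A3 | B | V

open FreeGroup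

/-- Relators (each relation `w₁ = w₂` is encoded as `w₁ * w₂⁻¹`):
`A₁A₃ = A₃A₁`; `A₁BA₁ = BA₁B`; `A₃BA₃ = BA₃B`; `V A₁ V⁻¹ = A₁⁻¹`; `V B V⁻¹ = B⁻¹`;
`V² = (A₁²A₃B)³`. -/
def relsV : Set (FreeGroup GenV) :=
  { of .A1 * of .A3 * (of .A3 * of .A1)⁻¹,
    of .A1 * of .B * of .A1 * (of .B * of .A1 * of .B)⁻¹,
    of .A3 * of .B * of .A3 * (of .B * of .A3 * of .B)⁻¹,
    of .V * of .A1 * (of .V)⁻¹ * of .A1,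
    of .V * of .B * (of .V)⁻¹ * of .B,
    (of .V) ^ 2 * (((of .A1) ^ 2 * of .A3 * of .B) ^ 3)⁻¹ }

/-- The presented group `G`, the mapping class group `Mod(N_{3,1})`. -/
abbrev G : Type := PresentedGroup relsV

def A1 : G := PresentedGroup.of GenV.A1
def A3 : G := PresentedGroup.of GenV.A3
def B : G := PresentedGroup.of GenV.B
def V : G := PresentedGroup.of GenV.V

/-- The Dehn twist `W = V⁻¹ A₃ V`. -/
def W : G := V⁻¹ * A3 * V

/-- The subgroup `L` generated by the Dehn twists `A₁, A₃, B, W`. -/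
def L : Subgroup G := Subgroup.closure {A1, A3, B, W}

/-! ### Auxiliary lemmas -/

lemma mk_rel {r : FreeGroup GenV} (h : r ∈ relsV) : PresentedGroup.mk relsV r = 1 :=
  (QuotientGroup.eq_one_iff _).mpr (Subgroup.subset_normalClosure h)

lemma relVA1 : V * A1 * V⁻¹ = A1⁻¹ := by
  have := mk_rel (r := of .V * of .A1 * (of .V)⁻¹ * of .A1) (by simp [relsV])
  rw [eq_inv_iff_mul_eq_one]
  simpa [V, A1, PresentedGroup.of] using this

lemma relVB : V * B * V⁻¹ = B⁻¹ := by
  have := mk_rel (r := of .V * of .B * (of .V)⁻¹ * of .B) (by simp [relsV])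
  rw [eq_inv_iff_mul_eq_one]
  simpa [V, B, PresentedGroup.of] using this

lemma relV2 : V ^ 2 = (A1 ^ 2 * A3 * B) ^ 3 := by
  have := mk_rel (r := (of .V) ^ 2 * (((of .A1) ^ 2 * of .A3 * of .B) ^ 3)⁻¹)
    (by simp [relsV])
  rw [MonoidHom.map_mul, MonoidHom.map_inv, mul_inv_eq_one] at this
  simpa [V, A1, A3, B, PresentedGroup.of] using this

lemma A1_mem : A1 ∈ L := Subgroup.subset_closure (by simp)
lemma A3_mem : A3 ∈ L := Subgroup.subset_closure (by simp)
lemma B_mem : B ∈ L := Subgroup.subset_closure (by simp)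
lemma W_mem : W ∈ L := Subgroup.subset_closure (by simp)

lemma V2_mem : V ^ 2 ∈ L := by
  rw [relV2]
  exact pow_mem (mul_mem (mul_mem (pow_mem A1_mem 2) A3_mem) B_mem) 3

lemma relV'A1 : V⁻¹ * A1 * V = A1⁻¹ := by
  have key : V * (V⁻¹ * A1 * V) * V⁻¹ = V * A1⁻¹ * V⁻¹ := by
    have h1 : V * (V⁻¹ * A1 * V) * V⁻¹ = A1 := by group
    have h2 : V * A1⁻¹ * V⁻¹ = (V * A1 * V⁻¹)⁻¹ := by group
    rw [h1, h2, relVA1, inv_inv]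
  exact mul_left_cancel (mul_right_cancel key)

lemma relV'B : V⁻¹ * B * V = B⁻¹ := by
  have key : V * (V⁻¹ * B * V) * V⁻¹ = V * B⁻¹ * V⁻¹ := by
    have h1 : V * (V⁻¹ * B * V) * V⁻¹ = B := by group
    have h2 : V * B⁻¹ * V⁻¹ = (V * B * V⁻¹)⁻¹ := by group
    rw [h1, h2, relVB, inv_inv]
  exact mul_left_cancel (mul_right_cancel key)

lemma VA3_mem : V * A3 * V⁻¹ ∈ L := by
  have : V * A3 * V⁻¹ = V ^ 2 * W * (V ^ 2)⁻¹ := by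
    simp only [W, sq]; group
  rw [this]
  exact mul_mem (mul_mem V2_mem W_mem) (inv_mem V2_mem)

lemma VW_mem : V * W * V⁻¹ ∈ L := by
  have : V * W * V⁻¹ = A3 := by simp only [W, sq]; group
  rw [this]; exact A3_mem

lemma V'W_mem : V⁻¹ * W * V ∈ L := by
  have : V⁻¹ * W * V = (V ^ 2)⁻¹ * A3 * V ^ 2 := by simp only [W, sq]; group
  rw [this]
  exact mul_mem (mul_mem (inv_mem V2_mem) A3_mem) V2_mem

/-- Conjugation subgroup criterion. -/
def K (g : G) : Subgroup G :=
  (L.comap (MulAut.conj g).toMonoidHom) ⊓ (L.comap (MulAut.conj g⁻¹).toMonoidHom)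

lemma mem_K_iff {g x : G} : x ∈ K g ↔ g * x * g⁻¹ ∈ L ∧ g⁻¹ * x * g ∈ L := by
  simp [K, Subgroup.mem_comap, MulAut.conj_apply]

lemma L_le_K_of_mem_L {g : G} (hg : g ∈ L) : L ≤ K g := fun x hx => by
  rw [mem_K_iff]
  exact ⟨mul_mem (mul_mem hg hx) (inv_mem hg), mul_mem (mul_mem (inv_mem hg) hx) hg⟩

lemma L_le_K_V : L ≤ K V := by
  rw [L, Subgroup.closure_le]
  intro x hx
  simp only [Set.mem_insert_iff, Set.mem_singleton_iff] at hx
  rw [SetLike.mem_coe, mem_K_iff]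
  rcases hx with rfl | rfl | rfl | rfl
  · exact ⟨relVA1 ▸ inv_mem A1_mem, relV'A1 ▸ inv_mem A1_mem⟩
  · refine ⟨VA3_mem, ?_⟩
    have : V⁻¹ * A3 * V = W := rfl
    rw [this]; exact W_mem
  · exact ⟨relVB ▸ inv_mem B_mem, relV'B ▸ inv_mem B_mem⟩
  · exact ⟨VW_mem, V'W_mem⟩

lemma L_le_K (g : G) : L ≤ K g := by
  have htop : g ∈ Subgroup.closure (Set.range (PresentedGroup.of : GenV → G)) := by
    rw [PresentedGroup.closure_range_of]; trivial
  induction htop using Subgroup.closure_induction with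
  | mem x hx =>
    obtain ⟨a, rfl⟩ := hx
    cases a
    · exact L_le_K_of_mem_L A1_mem
    · exact L_le_K_of_mem_L A3_mem
    · exact L_le_K_of_mem_L B_mem
    · exact L_le_K_V
  | one =>
    intro x hx
    rw [mem_K_iff]
    simp only [one_mul, inv_one, mul_one]
    exact ⟨hx, hx⟩
  | mul a b _ _ ha hb =>
    intro x hx
    rw [mem_K_iff]
    constructor
    · have h1 : b * x * b⁻¹ ∈ L := (mem_K_iff.mp (hb hx)).1
      have h2 : a * (b * x * b⁻¹) * a⁻¹ ∈ L := (mem_K_iff.mp (ha h1)).1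
      have : a * b * x * (a * b)⁻¹ = a * (b * x * b⁻¹) * a⁻¹ := by group
      rw [this]; exact h2
    · have h1 : a⁻¹ * x * a ∈ L := (mem_K_iff.mp (ha hx)).2
      have h2 : b⁻¹ * (a⁻¹ * x * a) * b ∈ L := (mem_K_iff.mp (hb h1)).2
      have : (a * b)⁻¹ * x * (a * b) = b⁻¹ * (a⁻¹ * x * a) * b := by group
      rw [this]; exact h2
  | inv a _ ha =>
    intro x hx
    rw [mem_K_iff]
    have h := mem_K_iff.mp (ha hx)
    simp only [inv_inv]
    exact ⟨h.2, h.1⟩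

lemma L_normal : L.Normal := by
  constructor
  intro n hn g
  exact (mem_K_iff.mp (L_le_K g hn)).1

/-- The coset decomposition: every element is in `L` or in `V⁻¹L`. -/
lemma mem_or_mem (g : G) : g ∈ L ∨ V * g ∈ L := by
  have htop : g ∈ Subgroup.closure (Set.range (PresentedGroup.of : GenV → G)) := by
    rw [PresentedGroup.closure_range_of]; trivial
  induction htop using Subgroup.closure_induction with
  | mem x hx =>
    obtain ⟨a, rfl⟩ := hx
    cases a
    · exact Or.inl A1_mem
    · exact Or.inl A3_mem
    · exact Or.inl B_mem
    · right
      have : V * PresentedGroup.of GenV.V = V ^ 2 := by rw [sq]; rfl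
      rw [this]; exact V2_mem
  | one => exact Or.inl (one_mem L)
  | mul a b _ _ ha hb =>
    rcases ha with ha | ha <;> rcases hb with hb | hb
    · exact Or.inl (mul_mem ha hb)
    · right
      have : V * (a * b) = (V * a * V⁻¹) * (V * b) := by group
      rw [this]
      exact mul_mem ((mem_K_iff.mp (L_le_K V ha)).1) hb
    · right
      have : V * (a * b) = (V * a) * b := by group
      rw [this]; exact mul_mem ha hb
    · left
      have : a * b = (V ^ 2)⁻¹ * (V * (V * a) * V⁻¹) * (V * b) := by rw [sq]; group
      rw [this]
      exact mul_mem (mul_mem (inv_mem V2_mem) ((mem_K_iff.mp (L_le_K V ha)).1)) hb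
  | inv a _ ha =>
    rcases ha with ha | ha
    · exact Or.inl (inv_mem ha)
    · right
      have : V * a⁻¹ = V ^ 2 * (V⁻¹ * (V * a)⁻¹ * V) := by rw [sq]; group
      rw [this]
      exact mul_mem V2_mem ((mem_K_iff.mp (L_le_K V (inv_mem ha))).2)

/-- The sign homomorphism to `ZMod 2`, counting occurrences of `V`. -/
def fV : GenV → Multiplicative (ZMod 2)
  | .V => Multiplicative.ofAdd 1
  | _ => 1

lemma relsV_lift : ∀ r ∈ relsV, FreeGroup.lift fV r = 1 := by
  intro r hr
  simp only [relsV, Set.mem_insert_iff, Set.mem_singleton_iff] at hr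
  rcases hr with rfl | rfl | rfl | rfl | rfl | rfl
  all_goals simp [fV]
  all_goals decide

def φ : G →* Multiplicative (ZMod 2) := PresentedGroup.toGroup relsV_lift

lemma φ_A1 : φ A1 = 1 := PresentedGroup.toGroup.of relsV_lift
lemma φ_A3 : φ A3 = 1 := PresentedGroup.toGroup.of relsV_lift
lemma φ_B : φ B = 1 := PresentedGroup.toGroup.of relsV_lift
lemma φ_V : φ V = Multiplicative.ofAdd 1 := PresentedGroup.toGroup.of relsV_lift

lemma L_le_ker : L ≤ φ.ker := by
  rw [L, Subgroup.closure_le]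
  intro x hx
  simp only [Set.mem_insert_iff, Set.mem_singleton_iff] at hx
  rw [SetLike.mem_coe, MonoidHom.mem_ker]
  rcases hx with rfl | rfl | rfl | rfl
  · exact φ_A1
  · exact φ_A3
  · exact φ_B
  · simp [W, MonoidHom.map_mul, MonoidHom.map_inv, φ_A3]

lemma V_not_mem : V ∉ L := by
  intro h
  have := L_le_ker h
  rw [MonoidHom.mem_ker, φ_V] at this
  exact absurd this (by decide)

lemma L_eq_ker : L = φ.ker := by
  refine le_antisymm L_le_ker ?_
  intro g hg
  rcases mem_or_mem g with h | h
  · exact h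
  · exfalso
    have h1 : φ (V * g) = 1 := MonoidHom.mem_ker.mp (L_le_ker h)
    rw [MonoidHom.map_mul, MonoidHom.mem_ker.mp hg, mul_one, φ_V] at h1
    exact absurd h1 (by decide)

lemma φ_surj : Function.Surjective φ := by
  intro x
  have : x = 1 ∨ x = Multiplicative.ofAdd 1 := by
    revert x; decide
  rcases this with rfl | rfl
  · exact ⟨1, MonoidHom.map_one φ⟩
  · exact ⟨V, φ_V⟩

lemma L_index : L.index = 2 := by
  rw [L_eq_ker, Subgroup.index_ker, MonoidHom.range_eq_top.mpr φ_surj]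
  rw [Nat.card_congr Subgroup.topEquiv.toEquiv, Nat.card_eq_fintype_card]
  rfl

/-- `L` is normal in `G`, `V ∉ L`, `V² ∈ L`, and `L` has index `2` in `G`. -/
theorem L_normal_index_two :
    L.Normal ∧ V ∉ L ∧ V ^ 2 ∈ L ∧ L.index = 2 :=
  ⟨L_normal, V_not_mem, V2_mem, L_index⟩

end ModN31
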